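/- If S ⊆ [n] is not a solution of the partition problem (Σ_{i∈S} k_i ≠ c where Σ_i k_i = 2c and all k_i are integers), then one of weight(S), weight(S̄) is ≥ m/2 and the other is ≤ −3m/2, hence σ(m/2) ≤ σ(weight(S)) + σ(weight(S̄)) ≤ 1 + σ(−3m/2), for m > 0. -/
import Mathlib


open Finset

/-- The logistic function. -/
noncomputable def sigmoid (t : ℝ) : ℝ := 1 / (1 + Real.exp (-t))

/-- `weight(S) = -m/2 - m·c + m·Σ_{i∈S} k i`. -/
noncomputable def weight {n : ℕ} (m : ℝ) (c : ℕ) (k : Fin n → ℕ) (S : Finset (Fin n)) : ℝ :=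
  -(m / 2) - m * c + m * ∑ i ∈ S, (k i : ℝ)

lemma sigmoid_pos (t : ℝ) : 0 < sigmoid t := by
  unfold sigmoid
  positivity

lemma sigmoid_lt_one (t : ℝ) : sigmoid t < 1 := by
  unfold sigmoid
  rw [div_lt_one (by positivity)]
  linarith [Real.exp_pos (-t)]

lemma sigmoid_mono {a b : ℝ} (h : a ≤ b) : sigmoid a ≤ sigmoid b := by
  unfold sigmoid
  apply div_le_div_of_nonneg_left (by norm_num) (by positivity)
  have := Real.exp_le_exp.2 (neg_le_neg h)
  linarith

theorem stmt11 {n : ℕ} (k : Fin n → ℕ) (c : ℕ) (m : ℝ) (hm : 0 < m)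
    (hsum : ∑ i : Fin n, k i = 2 * c)
    (S : Finset (Fin n)) (hS : ∑ i ∈ S, k i ≠ c) :
    ((m / 2 ≤ weight m c k S ∧ weight m c k Sᶜ ≤ -(3 * m / 2)) ∨
        (m / 2 ≤ weight m c k Sᶜ ∧ weight m c k S ≤ -(3 * m / 2))) ∧
      sigmoid (m / 2) ≤ sigmoid (weight m c k S) + sigmoid (weight m c k Sᶜ) ∧
      sigmoid (weight m c k S) + sigmoid (weight m c k Sᶜ) ≤ 1 + sigmoid (-(3 * m / 2)) := by
  have hadd : ∑ i ∈ S, k i + ∑ i ∈ Sᶜ, k i = 2 * c := by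
    rw [Finset.sum_add_sum_compl S k, hsum]
  have hR : (∑ i ∈ S, (k i : ℝ)) + ∑ i ∈ Sᶜ, (k i : ℝ) = 2 * c := by
    rw [← Nat.cast_sum, ← Nat.cast_sum, ← Nat.cast_add, hadd]
    push_cast; ring
  have hkey : (m / 2 ≤ weight m c k S ∧ weight m c k Sᶜ ≤ -(3 * m / 2)) ∨
      (m / 2 ≤ weight m c k Sᶜ ∧ weight m c k S ≤ -(3 * m / 2)) := by
    rcases lt_or_gt_of_ne hS with h | h
    · -- s ≤ c - 1, so Σ Sᶜ ≥ c + 1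
      right
      have h1 : (∑ i ∈ S, (k i : ℝ)) ≤ (c : ℝ) - 1 := by
        have : ∑ i ∈ S, k i + 1 ≤ c := h
        have := Nat.cast_le (α := ℝ).2 this
        push_cast at this ⊢
        linarith
      constructor
      · unfold weight; nlinarith
      · unfold weight; nlinarith
    · left
      have h1 : (c : ℝ) + 1 ≤ ∑ i ∈ S, (k i : ℝ) := by
        have : c + 1 ≤ ∑ i ∈ S, k i := h
        have := Nat.cast_le (α := ℝ).2 this
        push_cast at this ⊢
        linarith
      constructor
      · unfold weight; nlinarith
      · unfold weight; nlinarith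
  refine ⟨hkey, ?_, ?_⟩
  · rcases hkey with ⟨h1, _⟩ | ⟨h1, _⟩
    · linarith [sigmoid_mono h1, (sigmoid_pos (weight m c k Sᶜ)).le]
    · linarith [sigmoid_mono h1, (sigmoid_pos (weight m c k S)).le]
  · rcases hkey with ⟨_, h2⟩ | ⟨_, h2⟩
    · linarith [sigmoid_mono h2, (sigmoid_lt_one (weight m c k S)).le]
    · linarith [sigmoid_mono h2, (sigmoid_lt_one (weight m c k Sᶜ)).le]
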